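/- Let F be a field of characteristic 2, let q and q' be totally singular quadratic forms over F on finite-dimensional F-vector spaces, and let L/F be a separable algebraic field extension. If the scalar extensions q_L and q'_L are isometric over L, then q and q' are isometric over F. -/

import Mathlib

open scoped TensorProduct

/-- `Q` is the scalar extension of the quadratic form `q` to `L`: it satisfies
`Q (c ⊗ x) = c² ⬝ q x` and its polar form is the base change of the polar form of `q`
(a bilinear form is determined by its values on pure tensors). -/
def IsScalarExt (F : Type*) {L : Type*} [Field F] [Field L] [Algebra F L]
    {V : Type*} [AddCommGroup V] [Module F V]
    (q : QuadraticForm F V) (Q : QuadraticForm L (L ⊗[F] V)) : Prop :=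
  (∀ (c : L) (x : V), Q (c ⊗ₜ[F] x) = c ^ 2 * algebraMap F L (q x)) ∧
  ∀ (c d : L) (x y : V),
    QuadraticMap.polar (⇑Q) (c ⊗ₜ[F] x) (d ⊗ₜ[F] y) =
      c * d * algebraMap F L (QuadraticMap.polar (⇑q) x y)

/-!
In characteristic 2 a totally singular form is additive with `q (c • v) = c ^ 2 * q v`, i.e. an
`F`-linear map into `F` viewed as a module through the Frobenius. Its isometry class is therefore
determined by `dim V` and the `F²`-subspace `q(V)` of `F`, and both survive base change. For the
image: a value of `q` is an `L²`-combination of the values `q' (b i)` on a basis, and since `L/F`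
is separable, squares of `F`-linearly independent elements of `L` stay linearly independent, so
comparing coefficients turns it into an `F²`-combination of the same values.
-/

open Module in
theorem LinearMap.exists_linearEquiv_comp_eq_of_range_eq {K V V' W : Type*} [DivisionRing K]
    [AddCommGroup V] [Module K V] [FiniteDimensional K V]
    [AddCommGroup V'] [Module K V'] [FiniteDimensional K V']
    [AddCommGroup W] [Module K W] (f : V →ₗ[K] W) (f' : V' →ₗ[K] W)
    (hrange : range f = range f') (hdim : finrank K V = finrank K V') :
    ∃ e : V ≃ₗ[K] V', ∀ v, f' (e v) = f v := by
  obtain ⟨C, hC⟩ := (ker f).exists_isCompl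
  obtain ⟨C', hC'⟩ := (ker f').exists_isCompl
  let g : C ≃ₗ[K] range f := ((ker f).quotientEquivOfIsCompl C hC).symm ≪≫ₗ f.quotKerEquivRange
  let g' : C' ≃ₗ[K] range f' :=
    ((ker f').quotientEquivOfIsCompl C' hC').symm ≪≫ₗ f'.quotKerEquivRange
  let φ : C ≃ₗ[K] C' := g ≪≫ₗ LinearEquiv.ofEq _ _ hrange ≪≫ₗ g'.symm
  have hφ : ∀ c, f' (φ c) = f c := fun c => by
    have : ((g' (φ c) : range f') : W) = (g c : W) := by simp [φ]
    simpa [g, g'] using this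
  have hker : finrank K (ker f) = finrank K (ker f') := by
    have h := f.finrank_range_add_finrank_ker
    have h' := f'.finrank_range_add_finrank_ker
    rw [hrange] at h
    omega
  let e := (Submodule.prodEquivOfIsCompl _ _ hC).symm ≪≫ₗ
    (LinearEquiv.ofFinrankEq _ _ hker).prodCongr φ ≪≫ₗ Submodule.prodEquivOfIsCompl _ _ hC'
  refine ⟨e, fun v => ?_⟩
  obtain ⟨⟨a, c⟩, rfl⟩ := (Submodule.prodEquivOfIsCompl _ _ hC).surjective v
  simp [e, hφ]

theorem exists_eq_sum_pow_mul_of_algebraMap_eq {F L : Type*} [Field F] [Field L] [Algebra F L]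
    [Algebra.IsSeparable F L] (p : ℕ) [ExpChar F p] {ι : Type*} [Fintype ι]
    (a : F) (β : ι → F) (μ : ι → L) (h : algebraMap F L a = ∑ i, μ i ^ p * algebraMap F L (β i)) :
    ∃ c : ι → F, a = ∑ i, c i ^ p * β i := by
  classical
  have : ExpChar L p := expChar_of_injective_algebraMap (algebraMap F L).injective p
  let x : Option ι → L := fun k => k.elim 1 μ
  obtain ⟨b, hb_sub, hb_span, hb_li⟩ := exists_linearIndependent F (Set.range x)
  have : Fintype b := ((Set.finite_range x).subset hb_sub).fintype
  have hx : ∀ k, ∃ t : b → F, ∑ j, t j • (j : L) = x k := fun k =>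
    (Submodule.mem_span_range_iff_exists_fun F).1 <| by
      rw [Subtype.range_coe, hb_span]; exact Submodule.subset_span ⟨k, rfl⟩
  choose t ht using hx
  have hli : LinearIndependent F (fun j : b => (j : L) ^ p) := by
    simpa using hb_li.map_pow_expChar_pow_of_isSeparable p 1
  have hpow : ∀ k, x k ^ p = ∑ j, t k j ^ p • (j : L) ^ p := fun k => by
    simp_rw [← ht k, sum_pow_char, smul_pow]
  have hcoeff : ∀ j, a * t none j ^ p = ∑ i, t (some i) j ^ p * β i := by
    refine Fintype.linearIndependent_iffₛ.1 hli _ _ ?_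
    calc ∑ j, (a * t none j ^ p) • (j : L) ^ p = a • x none ^ p := by
          simp_rw [hpow, Finset.smul_sum, mul_smul]
      _ = ∑ i, β i • x (some i) ^ p := by
          simp [x, h, Algebra.smul_def, mul_comm]
      _ = ∑ j, (∑ i, t (some i) j ^ p * β i) • (j : L) ^ p := by
          simp_rw [hpow, Finset.smul_sum, smul_smul, Finset.sum_smul, mul_comm (β _)]
          exact Finset.sum_comm
  obtain ⟨j, hj⟩ : ∃ j, t none j ≠ 0 := by
    by_contra! h0
    simpa [h0, x] using ht none
  refine ⟨fun i => t (some i) j / t none j, ?_⟩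
  simp_rw [div_pow, div_mul_eq_mul_div, ← Finset.sum_div, ← hcoeff]
  field_simp

theorem QuadraticMap.map_add_of_polar_eq_zero {M N : Type*} [AddCommGroup M] [AddCommGroup N]
    {f : M → N} (h : ∀ x y, polar f x y = 0) (x y : M) : f (x + y) = f x + f y := by
  rw [← sub_eq_zero, ← sub_sub]
  exact h x y

theorem QuadraticMap.map_sum_of_polar_eq_zero {M N ι : Type*} [AddCommGroup M] [AddCommGroup N]
    {f : M → N} (h : ∀ x y, polar f x y = 0) (s : Finset ι) (v : ι → M) :
    f (∑ i ∈ s, v i) = ∑ i ∈ s, f (v i) :=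
  map_sum (AddMonoidHom.mk' f (map_add_of_polar_eq_zero h)) v s

/-- `F` as a module over itself through the Frobenius: `c • x = c ^ p * x`. -/
def FrobeniusTwist (F : Type*) (_p : ℕ) : Type _ := F

instance (F : Type*) [CommRing F] (p : ℕ) : AddCommGroup (FrobeniusTwist F p) :=
  inferInstanceAs (AddCommGroup F)

noncomputable instance (F : Type*) [CommRing F] (p : ℕ) [ExpChar F p] :
    Module F (FrobeniusTwist F p) :=
  Module.compHom F (frobenius F p)

noncomputable def QuadraticForm.toFrobeniusTwist {F V : Type*} [Field F] [CharP F 2]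
    [AddCommGroup V] [Module F V] (q : QuadraticForm F V)
    (hts : ∀ x y : V, QuadraticMap.polar (⇑q) x y = 0) : V →ₗ[F] FrobeniusTwist F 2 where
  toFun v := q v
  map_add' := QuadraticMap.map_add_of_polar_eq_zero hts
  map_smul' c v := by
    change q (c • v) = frobenius F 2 c * q v
    rw [QuadraticMap.map_smul, smul_eq_mul, frobenius_def, sq]

namespace IsScalarExt

variable {F L V : Type*} [Field F] [Field L] [Algebra F L] [AddCommGroup V] [Module F V]
  {q : QuadraticForm F V} {Q : QuadraticForm L (L ⊗[F] V)}

theorem polar_eq_zero (hQ : IsScalarExt F q Q)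
    (hts : ∀ x y : V, QuadraticMap.polar (⇑q) x y = 0) (z w : L ⊗[F] V) :
    QuadraticMap.polar (⇑Q) z w = 0 := by
  induction z using TensorProduct.induction_on with
  | zero => exact QuadraticMap.polar_zero_left _ _
  | add z₁ z₂ ih₁ ih₂ => rw [QuadraticMap.polar_add_left, ih₁, ih₂, add_zero]
  | tmul c x =>
    induction w using TensorProduct.induction_on with
    | zero => exact QuadraticMap.polar_zero_right _ _
    | add w₁ w₂ ih₁ ih₂ => rw [QuadraticMap.polar_add_right, ih₁, ih₂, add_zero]
    | tmul d y => rw [hQ.2, hts, map_zero, mul_zero]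

theorem apply_eq_sum (hQ : IsScalarExt F q Q)
    (hts : ∀ x y : V, QuadraticMap.polar (⇑q) x y = 0) {ι : Type*} [Fintype ι]
    (b : Module.Basis ι F V) (z : L ⊗[F] V) :
    Q z = ∑ i, (b.baseChange L).repr z i ^ 2 * algebraMap F L (q (b i)) := by
  conv_lhs => rw [← (b.baseChange L).sum_repr z]
  rw [QuadraticMap.map_sum_of_polar_eq_zero (hQ.polar_eq_zero hts)]
  refine Finset.sum_congr rfl fun i _ => ?_
  rw [Module.Basis.baseChange_apply, TensorProduct.smul_tmul', smul_eq_mul, mul_one, hQ.1]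

theorem range_subset_range [CharP F 2] [Algebra.IsSeparable F L] {V' : Type*}
    [AddCommGroup V'] [Module F V'] [FiniteDimensional F V']
    {q' : QuadraticForm F V'} {Q' : QuadraticForm L (L ⊗[F] V')} (hQ : IsScalarExt F q Q) (hQ' : IsScalarExt F q' Q')
    (hts' : ∀ x y : V', QuadraticMap.polar (⇑q') x y = 0)
    (e : (L ⊗[F] V) ≃ₗ[L] (L ⊗[F] V')) (he : ∀ z, Q' (e z) = Q z) :
    Set.range q ⊆ Set.range q' := by
  rintro _ ⟨v, rfl⟩
  let b := Module.finBasis F V'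
  obtain ⟨c, hc⟩ := exists_eq_sum_pow_mul_of_algebraMap_eq 2 (q v) (fun i => q' (b i))
    (fun i => (b.baseChange L).repr (e (1 ⊗ₜ v)) i)
    (by rw [← hQ'.apply_eq_sum hts', he, hQ.1, one_pow, one_mul])
  refine ⟨∑ i, c i • b i, ?_⟩
  simp_rw [QuadraticMap.map_sum_of_polar_eq_zero hts', QuadraticMap.map_smul, smul_eq_mul, hc, sq]

end IsScalarExt

theorem stmt_8_general {F L : Type*} [Field F] [CharP F 2] [Field L] [Algebra F L]
    [Algebra.IsSeparable F L]
    {V V' : Type*} [AddCommGroup V] [Module F V] [FiniteDimensional F V]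
    [AddCommGroup V'] [Module F V'] [FiniteDimensional F V']
    (q : QuadraticForm F V) (q' : QuadraticForm F V')
    (hts : ∀ x y : V, QuadraticMap.polar (⇑q) x y = 0)
    (hts' : ∀ x y : V', QuadraticMap.polar (⇑q') x y = 0)
    (Q : QuadraticForm L (L ⊗[F] V)) (hQ : IsScalarExt F q Q)
    (Q' : QuadraticForm L (L ⊗[F] V')) (hQ' : IsScalarExt F q' Q')
    (hiso : ∃ e : (L ⊗[F] V) ≃ₗ[L] (L ⊗[F] V'), ∀ z, Q' (e z) = Q z) :
    ∃ e : V ≃ₗ[F] V', ∀ x, q' (e x) = q x := by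
  obtain ⟨e, he⟩ := hiso
  have hdim : Module.finrank F V = Module.finrank F V' := by
    simpa only [Module.finrank_baseChange] using e.finrank_eq
  have hrange : Set.range q = Set.range q' :=
    (hQ.range_subset_range hQ' hts' e he).antisymm
      (hQ'.range_subset_range hQ hts e.symm fun z => by rw [← he, e.apply_symm_apply])
  exact (q.toFrobeniusTwist hts).exists_linearEquiv_comp_eq_of_range_eq
    (q'.toFrobeniusTwist hts') (SetLike.coe_injective hrange) hdim

/-- totally singular quadratic forms in characteristic 2 that become isometric
over a separable algebraic extension are already isometric over the base field. -/
theorem stmt_8 {F L : Type*} [Field F] [CharP F 2] [Field L] [Algebra F L]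
    [Algebra.IsAlgebraic F L] [Algebra.IsSeparable F L]
    {V V' : Type*} [AddCommGroup V] [Module F V] [FiniteDimensional F V]
    [AddCommGroup V'] [Module F V'] [FiniteDimensional F V']
    (q : QuadraticForm F V) (q' : QuadraticForm F V')
    (hts : ∀ x y : V, QuadraticMap.polar (⇑q) x y = 0)
    (hts' : ∀ x y : V', QuadraticMap.polar (⇑q') x y = 0)
    (Q : QuadraticForm L (L ⊗[F] V)) (hQ : IsScalarExt F q Q)
    (Q' : QuadraticForm L (L ⊗[F] V')) (hQ' : IsScalarExt F q' Q')
    (hiso : ∃ e : (L ⊗[F] V) ≃ₗ[L] (L ⊗[F] V'), ∀ z, Q' (e z) = Q z) :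
    ∃ e : V ≃ₗ[F] V', ∀ x, q' (e x) = q x :=
  stmt_8_general q q' hts hts' Q hQ Q' hQ' hiso
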